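/- arXiv:2205.01324 — 5 statements merged into one kernel-verified Lean document; each statement's English description precedes it below -/
import Mathlib

section
/- Let k : ℝ^d → ℝ be a measurable function with 0 ≤ k(w) ≤ M for all w ∈ ℝ^d, and let g be its Gaussian smoothing with parameter σ > 0. Then the Hessian of g is uniformly bounded in operator norm by M/σ²; equivalently, for every μ ∈ ℝ^d and every s ∈ ℝ^d, |sᵀ (∇²g(μ)) s| ≤ (M/σ²)·‖s‖². -/
/-!
Differentiating twice under the integral sign (justified by a Gaussian tail that dominates the
derivatives uniformly for `μ` in a unit ball), the Hessian of `g` at `μ` is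
`∫ k(w) ∇²p(w - μ) dw`, where `p` is the `N(0, σ²I)` density and
`∇²p(v) = p(v) (v vᵀ/σ⁴ - I/σ²)`. Hence `sᵀ ∇²g(μ) s = ∫ k(v + μ) (q(v) - r(v)) dv` with
`q = p ⟪v, s⟫²/σ⁴ ≥ 0` and `r = p ‖s‖²/σ² ≥ 0`. The same formula for `k ≡ 1`, whose smoothing is
constant, shows that `∫ q = ∫ r = ‖s‖²/σ²`; with `0 ≤ k ≤ M` this bounds the integral in absolute
value by `M ‖s‖²/σ²`.
-/

open MeasureTheory Real

/-- The Gaussian smoothing of `k : ℝ^d → ℝ` with parameter `σ`: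
`g(μ) = ∫ (2πσ²)^(−d/2) · exp(−‖w − μ‖²/(2σ²)) · k(w) dw = E_{w ∼ N(μ, σ²I)}[k(w)]`. -/
noncomputable def gaussSmooth (d : ℕ) (σ : ℝ) (k : EuclideanSpace ℝ (Fin d) → ℝ) :
    EuclideanSpace ℝ (Fin d) → ℝ :=
  fun μ => ∫ w, (2 * π * σ ^ 2) ^ (-(d : ℝ) / 2) * Real.exp (-‖w - μ‖ ^ 2 / (2 * σ ^ 2)) * k w

open Module
open scoped RealInnerProductSpace

theorem exp_neg_sq_mul_one_add_sq_le {σ u x : ℝ} (hσ : σ ≠ 0) (hu : 0 ≤ u) (hx : 0 ≤ x)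
    (hxu : x ≤ u + 1) :
    exp (-u ^ 2 / (2 * σ ^ 2)) * (1 + u) ^ 2 ≤
      exp (4 * σ ^ 2 + (4 * σ ^ 2)⁻¹) * exp (-(8 * σ ^ 2)⁻¹ * x ^ 2) := by
  have hpoly : (1 + u) ^ 2 ≤ exp (2 * u) := by
    rw [show 2 * u = u + u by ring, exp_add, ← sq, add_comm]
    exact pow_le_pow_left₀ (by positivity) (add_one_le_exp u) 2
  -- the constants come from `2u ≤ u²/(4σ²) + 4σ²` and `x² ≤ 2u² + 2`
  have hexp :
      -u ^ 2 / (2 * σ ^ 2) + 2 * u ≤ 4 * σ ^ 2 + (4 * σ ^ 2)⁻¹ + -(8 * σ ^ 2)⁻¹ * x ^ 2 := by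
    rw [← sub_nonneg]
    have e : 4 * σ ^ 2 + (4 * σ ^ 2)⁻¹ + -(8 * σ ^ 2)⁻¹ * x ^ 2 - (-u ^ 2 / (2 * σ ^ 2) + 2 * u) =
        (2 * (u - 4 * σ ^ 2) ^ 2 + ((u - 1) ^ 2 + ((u + 1) ^ 2 - x ^ 2))) / (8 * σ ^ 2) := by
      field_simp; ring
    rw [e]
    have : x ^ 2 ≤ (u + 1) ^ 2 := pow_le_pow_left₀ hx hxu 2
    positivity
  calc exp (-u ^ 2 / (2 * σ ^ 2)) * (1 + u) ^ 2
      ≤ exp (-u ^ 2 / (2 * σ ^ 2)) * exp (2 * u) := by gcongr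
    _ ≤ exp (4 * σ ^ 2 + (4 * σ ^ 2)⁻¹) * exp (-(8 * σ ^ 2)⁻¹ * x ^ 2) := by
      rw [← exp_add, ← exp_add]; exact exp_le_exp.2 hexp

section Density

variable {V : Type*} [NormedAddCommGroup V] [InnerProductSpace ℝ V] {σ : ℝ}

/-- `innerSL ℝ` itself is typed as conjugate-linear, `V →L⋆[ℝ] V →L[ℝ] ℝ`. -/
noncomputable def realInnerSL : V →L[ℝ] V →L[ℝ] ℝ := innerSL ℝ

@[simp] theorem realInnerSL_apply (s t : V) : realInnerSL s t = ⟪s, t⟫ := rfl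

noncomputable def gaussDensity (σ : ℝ) (v : V) : ℝ :=
  (2 * π * σ ^ 2) ^ (-(finrank ℝ V : ℝ) / 2) * exp (-‖v‖ ^ 2 / (2 * σ ^ 2))

noncomputable def gaussDensityFDeriv (σ : ℝ) (v : V) : V →L[ℝ] ℝ :=
  -(gaussDensity σ v / σ ^ 2) • realInnerSL v

noncomputable def gaussDensityHessian (σ : ℝ) (v : V) : V →L[ℝ] V →L[ℝ] ℝ :=
  (gaussDensity σ v / σ ^ 2) • ((σ ^ 2)⁻¹ • (realInnerSL v).smulRight (realInnerSL v) - realInnerSL)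

theorem gaussDensity_nonneg (v : V) : 0 ≤ gaussDensity σ v := by
  unfold gaussDensity; positivity

theorem gaussDensityHessian_apply (v s t : V) :
    gaussDensityHessian σ v s t =
      gaussDensity σ v / σ ^ 2 * (⟪v, s⟫ * ⟪v, t⟫ / σ ^ 2 - ⟪s, t⟫) := by
  simp only [gaussDensityHessian, smul_apply, sub_apply,
    ContinuousLinearMap.smulRight_apply, realInnerSL_apply, smul_eq_mul]
  ring

theorem gaussDensityHessian_apply_self (v s : V) :
    gaussDensityHessian σ v s s =
      gaussDensity σ v * ⟪v, s⟫ ^ 2 / σ ^ 4 - gaussDensity σ v * ‖s‖ ^ 2 / σ ^ 2 := by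
  rw [gaussDensityHessian_apply, real_inner_self_eq_norm_sq]
  ring

theorem hasFDerivAt_gaussDensity (v : V) :
    HasFDerivAt (gaussDensity σ) (gaussDensityFDeriv σ v) v := by
  have h := HasFDerivAt.const_mul (HasFDerivAt.exp (HasFDerivAt.const_mul
    (HasFDerivAt.norm_sq (hasFDerivAt_id v)) (-(2 * σ ^ 2)⁻¹)))
    ((2 * π * σ ^ 2) ^ (-(finrank ℝ V : ℝ) / 2))
  have e : gaussDensity (V := V) σ = fun y =>
      (2 * π * σ ^ 2) ^ (-(finrank ℝ V : ℝ) / 2) * exp (-(2 * σ ^ 2)⁻¹ * ‖id y‖ ^ 2) := by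
    ext y; simp [gaussDensity, div_eq_inv_mul, mul_comm]
  rw [e]
  refine h.congr_fderiv ?_
  ext w
  simp only [gaussDensityFDeriv, gaussDensity, smul_apply, realInnerSL_apply, smul_eq_mul,
    ContinuousLinearMap.comp_id, coe_innerSL_apply, nsmul_eq_mul, id_eq]
  ring_nf

theorem hasFDerivAt_gaussDensityFDeriv (v : V) :
    HasFDerivAt (gaussDensityFDeriv σ) (gaussDensityHessian σ v) v := by
  have h := HasFDerivAt.smul (HasFDerivAt.const_mul (hasFDerivAt_gaussDensity (σ := σ) v)
    (-(σ ^ 2)⁻¹)) (realInnerSL (V := V)).hasFDerivAt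
  have e : gaussDensityFDeriv (V := V) σ = fun y =>
      (-(σ ^ 2)⁻¹ * gaussDensity σ y) • realInnerSL y := by
    ext y; simp [gaussDensityFDeriv, div_eq_mul_inv, mul_comm]
  rw [e]
  refine h.congr_fderiv ?_
  ext w t
  simp only [gaussDensityHessian, gaussDensityFDeriv, add_apply, sub_apply, smul_apply,
    ContinuousLinearMap.smulRight_apply, realInnerSL_apply, smul_eq_mul]
  ring

theorem continuous_gaussDensityFDeriv : Continuous (gaussDensityFDeriv (V := V) σ) :=
  continuous_iff_continuousAt.2 fun v => (hasFDerivAt_gaussDensityFDeriv v).continuousAt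

theorem continuous_gaussDensityHessian : Continuous (gaussDensityHessian (V := V) σ) := by
  have h : ContDiff ℝ 1 (gaussDensityFDeriv (V := V) σ) := by
    have := contDiff_norm_sq ℝ (E := V) (n := 1)
    unfold gaussDensityFDeriv gaussDensity
    fun_prop
  rw [show gaussDensityHessian σ = fderiv ℝ (gaussDensityFDeriv σ) from
    funext fun v => (hasFDerivAt_gaussDensityFDeriv v).fderiv.symm]
  exact h.continuous_fderiv one_ne_zero

theorem norm_gaussDensityFDeriv_le (v : V) :
    ‖gaussDensityFDeriv σ v‖ ≤ gaussDensity σ v * ‖v‖ / σ ^ 2 := by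
  have := gaussDensity_nonneg (σ := σ) v
  refine ContinuousLinearMap.opNorm_le_bound _ (by positivity) fun s => ?_
  rw [gaussDensityFDeriv, smul_apply, realInnerSL_apply, smul_eq_mul,
    norm_mul, norm_neg, Real.norm_of_nonneg (by positivity), mul_div_right_comm, mul_assoc]
  gcongr
  exact norm_inner_le_norm v s

theorem norm_gaussDensityHessian_le (v : V) :
    ‖gaussDensityHessian σ v‖ ≤ gaussDensity σ v / σ ^ 2 * (‖v‖ ^ 2 / σ ^ 2 + 1) := by
  have := gaussDensity_nonneg (σ := σ) v
  refine ContinuousLinearMap.opNorm_le_bound₂ _ (by positivity) fun s t => ?_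
  have hs := abs_real_inner_le_norm v s
  have ht := abs_real_inner_le_norm v t
  have hst := abs_real_inner_le_norm s t
  rw [gaussDensityHessian_apply, Real.norm_eq_abs, abs_mul, abs_of_nonneg (by positivity),
    mul_assoc, mul_assoc]
  gcongr
  calc |⟪v, s⟫ * ⟪v, t⟫ / σ ^ 2 - ⟪s, t⟫| ≤ |⟪v, s⟫| * |⟪v, t⟫| / σ ^ 2 + |⟪s, t⟫| :=
        (abs_sub _ _).trans_eq (by rw [abs_div, abs_mul, abs_of_nonneg (sq_nonneg σ)])
    _ ≤ (‖v‖ * ‖s‖) * (‖v‖ * ‖t‖) / σ ^ 2 + ‖s‖ * ‖t‖ := by gcongr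
    _ = (‖v‖ ^ 2 / σ ^ 2 + 1) * (‖s‖ * ‖t‖) := by ring

theorem gaussDensity_mul_one_add_norm_sq_le (hσ : σ ≠ 0) {v v₀ : V} (hv : dist v v₀ < 1) :
    gaussDensity σ v * (1 + ‖v‖) ^ 2 ≤ (2 * π * σ ^ 2) ^ (-(finrank ℝ V : ℝ) / 2) *
      (exp (4 * σ ^ 2 + (4 * σ ^ 2)⁻¹) * exp (-(8 * σ ^ 2)⁻¹ * ‖v₀‖ ^ 2)) := by
  have hv₀ : ‖v₀‖ ≤ ‖v‖ + 1 := by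
    have := norm_le_norm_add_norm_sub' v₀ v
    rw [norm_sub_rev, ← dist_eq_norm] at this
    linarith
  rw [gaussDensity, mul_assoc]
  exact mul_le_mul_of_nonneg_left
    (exp_neg_sq_mul_one_add_sq_le hσ (norm_nonneg v) (norm_nonneg v₀) hv₀) (by positivity)

theorem gaussDensity_mul_inner_sq_eq (hσ : σ ≠ 0) (s v : V) :
    gaussDensity σ v * ⟪v, s⟫ ^ 2 =
      σ ^ 4 * (gaussDensityHessian σ v s s + gaussDensity σ v * ‖s‖ ^ 2 / σ ^ 2) := by
  rw [gaussDensityHessian_apply_self]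
  field_simp
  ring

end Density

theorem abs_integral_mul_sub_le {α : Type*} [MeasurableSpace α] {ν : Measure α} {f q r : α → ℝ}
    {M c : ℝ} (hf : AEStronglyMeasurable f ν) (hf0 : ∀ x, 0 ≤ f x) (hfM : ∀ x, f x ≤ M)
    (hq0 : ∀ x, 0 ≤ q x) (hr0 : ∀ x, 0 ≤ r x) (hq : Integrable q ν) (hr : Integrable r ν)
    (hqc : ∫ x, q x ∂ν = c) (hrc : ∫ x, r x ∂ν = c) :
    |∫ x, f x * (q x - r x) ∂ν| ≤ M * c := by
  have hfb : ∀ᵐ x ∂ν, ‖f x‖ ≤ M := ae_of_all _ fun x => by rw [norm_of_nonneg (hf0 x)]; exact hfM x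
  have hfq := hq.bdd_mul hf hfb
  have hfr := hr.bdd_mul hf hfb
  have hfq_le : ∫ x, f x * q x ∂ν ≤ M * c := by
    rw [← hqc, ← integral_const_mul]
    exact integral_mono hfq (hq.const_mul M) fun x => mul_le_mul_of_nonneg_right (hfM x) (hq0 x)
  have hfr_le : ∫ x, f x * r x ∂ν ≤ M * c := by
    rw [← hrc, ← integral_const_mul]
    exact integral_mono hfr (hr.const_mul M) fun x => mul_le_mul_of_nonneg_right (hfM x) (hr0 x)
  have hfq_nonneg : 0 ≤ ∫ x, f x * q x ∂ν := integral_nonneg fun x => mul_nonneg (hf0 x) (hq0 x)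
  have hfr_nonneg : 0 ≤ ∫ x, f x * r x ∂ν := integral_nonneg fun x => mul_nonneg (hf0 x) (hr0 x)
  simp_rw [mul_sub]
  rw [integral_sub hfq hfr, abs_sub_le_iff]
  constructor <;> linarith

section ParametricIntegral

variable {V E : Type*} [NormedAddCommGroup V] [MeasurableSpace V] [BorelSpace V]
  [NormedAddCommGroup E] [NormedSpace ℝ E]
  {ν : Measure V} [ν.IsAddRightInvariant] {G : V → E} {k : V → ℝ} {M : ℝ}

theorem integrable_smul_comp_sub (hG : Integrable G ν) (hk : Measurable k)
    (hkM : ∀ w, |k w| ≤ M) (μ : V) : Integrable (fun w => k w • G (w - μ)) ν :=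
  (hG.comp_sub_right μ).bdd_smul M hk.aestronglyMeasurable (ae_of_all _ hkM)

theorem hasFDerivAt_integral_smul_comp_sub [NormedSpace ℝ V] [SecondCountableTopology V]
    {G' : V → V →L[ℝ] E} {h : V → ℝ}
    (hG : ∀ v, HasFDerivAt G (G' v) v) (hG' : Continuous G') (hGi : Integrable G ν)
    (hk : Measurable k) (hkM : ∀ w, |k w| ≤ M) (hh : Integrable h ν)
    (hG'h : ∀ v v₀, dist v v₀ < 1 → ‖G' v‖ ≤ h v₀) (μ₀ : V) :
    HasFDerivAt (fun μ => ∫ w, k w • G (w - μ) ∂ν) (-∫ w, k w • G' (w - μ₀) ∂ν) μ₀ := by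
  rw [← integral_neg]
  refine hasFDerivAt_integral_of_dominated_of_fderiv_le
    (F' := fun μ w => -(k w • G' (w - μ))) (bound := fun w => M * h (w - μ₀))
    (Metric.ball_mem_nhds μ₀ one_pos)
    (.of_forall fun μ => (integrable_smul_comp_sub hGi hk hkM μ).aestronglyMeasurable)
    (integrable_smul_comp_sub hGi hk hkM μ₀)
    (hk.aestronglyMeasurable.smul (hG'.comp (continuous_sub_right μ₀)).aestronglyMeasurable).neg
    (ae_of_all _ fun w μ hμ => ?_) ((hh.comp_sub_right μ₀).const_mul M)
    (ae_of_all _ fun w μ _ => ?_)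
  · rw [norm_neg, norm_smul, Real.norm_eq_abs]
    refine mul_le_mul (hkM w) (hG'h _ _ ?_) (norm_nonneg _) ((abs_nonneg _).trans (hkM w))
    rwa [dist_sub_left]
  · refine (((hG (w - μ)).comp μ ((hasFDerivAt_id μ).const_sub w)).const_smul (k w)).congr_fderiv ?_
    ext x
    simp

end ParametricIntegral

section Smoothing

variable {V : Type*} [NormedAddCommGroup V] [InnerProductSpace ℝ V] [FiniteDimensional ℝ V]
  [MeasurableSpace V] [BorelSpace V] {σ M : ℝ} {k : V → ℝ}

theorem integrable_exp_neg_mul_sq_norm {b : ℝ} (hb : 0 < b) :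
    Integrable fun v : V => exp (-b * ‖v‖ ^ 2) :=
  Integrable.of_integral_ne_zero <| by
    rw [GaussianFourier.integral_rexp_neg_mul_sq_norm hb]
    exact (rpow_pos_of_pos (div_pos pi_pos hb) _).ne'

theorem integral_gaussDensity (hσ : σ ≠ 0) : ∫ v : V, gaussDensity σ v = 1 := by
  have hb : 0 < (2 * σ ^ 2)⁻¹ := by positivity
  have hexp (v : V) : exp (-‖v‖ ^ 2 / (2 * σ ^ 2)) = exp (-(2 * σ ^ 2)⁻¹ * ‖v‖ ^ 2) := by
    ring_nf
  simp only [gaussDensity, hexp, integral_const_mul,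
    GaussianFourier.integral_rexp_neg_mul_sq_norm hb, div_inv_eq_mul]
  rw [show π * (2 * σ ^ 2) = 2 * π * σ ^ 2 by ring, ← rpow_add (by positivity),
    neg_div, neg_add_cancel, rpow_zero]

theorem integrable_gaussDensity (hσ : σ ≠ 0) : Integrable (gaussDensity (V := V) σ) :=
  Integrable.of_integral_ne_zero (by rw [integral_gaussDensity hσ]; exact one_ne_zero)

theorem exists_integrable_bound_gaussDensityFDeriv_gaussDensityHessian (hσ : σ ≠ 0) :
    ∃ h : V → ℝ, Integrable h ∧ ∀ v v₀ : V, dist v v₀ < 1 →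
      ‖gaussDensityFDeriv σ v‖ ≤ h v₀ ∧ ‖gaussDensityHessian σ v‖ ≤ h v₀ := by
  have hσ2 : 0 < (σ ^ 2)⁻¹ := by positivity
  refine ⟨fun v₀ => (σ ^ 2)⁻¹ * (1 + (σ ^ 2)⁻¹) * ((2 * π * σ ^ 2) ^ (-(finrank ℝ V : ℝ) / 2) *
      (exp (4 * σ ^ 2 + (4 * σ ^ 2)⁻¹) * exp (-(8 * σ ^ 2)⁻¹ * ‖v₀‖ ^ 2))),
    (((integrable_exp_neg_mul_sq_norm (by positivity)).const_mul _).const_mul _).const_mul _,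
    fun v v₀ hv => ?_⟩
  have htail := gaussDensity_mul_one_add_norm_sq_le hσ hv
  have hp := gaussDensity_nonneg (σ := σ) v
  have h1 : ‖v‖ ≤ (1 + ‖v‖) ^ 2 := by nlinarith [norm_nonneg v]
  have h2 : ‖v‖ ^ 2 ≤ (1 + ‖v‖) ^ 2 := by nlinarith [norm_nonneg v]
  have h3 : 1 ≤ (1 + ‖v‖) ^ 2 := by nlinarith [norm_nonneg v]
  refine ⟨(norm_gaussDensityFDeriv_le v).trans ?_, (norm_gaussDensityHessian_le v).trans ?_⟩
  · calc gaussDensity σ v * ‖v‖ / σ ^ 2 = (σ ^ 2)⁻¹ * 1 * (gaussDensity σ v * ‖v‖) := by ring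
      _ ≤ (σ ^ 2)⁻¹ * (1 + (σ ^ 2)⁻¹) * (gaussDensity σ v * (1 + ‖v‖) ^ 2) := by
        gcongr; linarith
      _ ≤ _ := mul_le_mul_of_nonneg_left htail (by positivity)
  · calc gaussDensity σ v / σ ^ 2 * (‖v‖ ^ 2 / σ ^ 2 + 1)
        = (σ ^ 2)⁻¹ * (gaussDensity σ v * ((σ ^ 2)⁻¹ * ‖v‖ ^ 2 + 1)) := by ring
      _ ≤ (σ ^ 2)⁻¹ * (gaussDensity σ v * ((σ ^ 2)⁻¹ * (1 + ‖v‖) ^ 2 + (1 + ‖v‖) ^ 2)) := by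
        gcongr
      _ = (σ ^ 2)⁻¹ * (1 + (σ ^ 2)⁻¹) * (gaussDensity σ v * (1 + ‖v‖) ^ 2) := by ring
      _ ≤ _ := mul_le_mul_of_nonneg_left htail (by positivity)

theorem hasFDerivAt_fderiv_integral_smul_gaussDensity (hσ : σ ≠ 0) (hk : Measurable k)
    (hkM : ∀ w, |k w| ≤ M) (μ₀ : V) :
    HasFDerivAt (fderiv ℝ fun μ => ∫ w, k w • gaussDensity σ (w - μ))
      (∫ w, k w • gaussDensityHessian σ (w - μ₀)) μ₀ := by
  obtain ⟨h, hh, hbound⟩ :=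
    exists_integrable_bound_gaussDensityFDeriv_gaussDensityHessian (V := V) hσ
  have hfderiv : fderiv ℝ (fun μ => ∫ w, k w • gaussDensity σ (w - μ)) =
      fun μ => -∫ w, k w • gaussDensityFDeriv σ (w - μ) :=
    funext fun μ => (hasFDerivAt_integral_smul_comp_sub hasFDerivAt_gaussDensity
      continuous_gaussDensityFDeriv (integrable_gaussDensity hσ) hk hkM hh
      (fun v v₀ hv => (hbound v v₀ hv).1) μ).fderiv
  have hFDeriv_int : Integrable (gaussDensityFDeriv (V := V) σ) :=
    hh.mono' continuous_gaussDensityFDeriv.aestronglyMeasurable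
      (ae_of_all _ fun v => (hbound v v (by simp)).1)
  have hd := (hasFDerivAt_integral_smul_comp_sub hasFDerivAt_gaussDensityFDeriv
    continuous_gaussDensityHessian hFDeriv_int hk hkM hh
    (fun v v₀ hv => (hbound v v₀ hv).2) μ₀).neg
  rw [neg_neg] at hd
  rwa [hfderiv]

theorem integral_smul_gaussDensityHessian_apply (hσ : σ ≠ 0) (hk : Measurable k)
    (hkM : ∀ w, |k w| ≤ M) (μ s t : V) :
    (∫ w, k w • gaussDensityHessian σ (w - μ)) s t =
      ∫ w, k w * gaussDensityHessian σ (w - μ) s t := by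
  obtain ⟨h, hh, hbound⟩ :=
    exists_integrable_bound_gaussDensityFDeriv_gaussDensityHessian (V := V) hσ
  have hHess_int := hh.mono' (f := gaussDensityHessian σ)
    continuous_gaussDensityHessian.aestronglyMeasurable
    (ae_of_all _ fun v => (hbound v v (by simp)).2)
  have hHess_s_int := hHess_int.apply_continuousLinearMap s
  rw [ContinuousLinearMap.integral_apply (integrable_smul_comp_sub hHess_int hk hkM μ)]
  exact ContinuousLinearMap.integral_apply (integrable_smul_comp_sub hHess_s_int hk hkM μ) t

theorem integral_gaussDensityHessian_apply (hσ : σ ≠ 0) (s t : V) :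
    ∫ v, gaussDensityHessian σ v s t = 0 := by
  have hd := hasFDerivAt_fderiv_integral_smul_gaussDensity hσ measurable_const
    (k := fun _ : V => (1 : ℝ)) (M := 1) (by simp) 0
  -- the smoothing of the constant `1` is constant, so its Hessian vanishes
  have hconst : (fun μ : V => ∫ w, (1 : ℝ) • gaussDensity σ (w - μ)) = fun _ => 1 := by
    ext μ
    simp [integral_sub_right_eq_self (gaussDensity σ) μ, integral_gaussDensity hσ]
  rw [hconst, fderiv_fun_const] at hd
  have h0 := integral_smul_gaussDensityHessian_apply hσ measurable_const
    (k := fun _ : V => (1 : ℝ)) (M := 1) (by simp) 0 s t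
  rw [hd.unique (hasFDerivAt_const 0 0)] at h0
  simpa using h0.symm

theorem integrable_gaussDensityHessian_apply (hσ : σ ≠ 0) (s t : V) :
    Integrable fun v => gaussDensityHessian σ v s t := by
  obtain ⟨h, hh, hbound⟩ :=
    exists_integrable_bound_gaussDensityFDeriv_gaussDensityHessian (V := V) hσ
  have hHess_int := hh.mono' (f := gaussDensityHessian σ)
    continuous_gaussDensityHessian.aestronglyMeasurable
    (ae_of_all _ fun v => (hbound v v (by simp)).2)
  exact (hHess_int.apply_continuousLinearMap s).apply_continuousLinearMap t

theorem integral_gaussDensity_mul_inner_sq (hσ : σ ≠ 0) (s : V) :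
    ∫ v, gaussDensity σ v * ⟪v, s⟫ ^ 2 = σ ^ 2 * ‖s‖ ^ 2 := by
  simp_rw [gaussDensity_mul_inner_sq_eq hσ s]
  rw [integral_const_mul, integral_add (integrable_gaussDensityHessian_apply hσ s s)
      (((integrable_gaussDensity hσ).mul_const _).div_const _), integral_div, integral_mul_const,
    integral_gaussDensityHessian_apply hσ, integral_gaussDensity hσ]
  field_simp
  ring

theorem integrable_gaussDensity_mul_inner_sq (hσ : σ ≠ 0) (s : V) :
    Integrable fun v => gaussDensity σ v * ⟪v, s⟫ ^ 2 := by
  simp_rw [gaussDensity_mul_inner_sq_eq hσ s]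
  exact ((integrable_gaussDensityHessian_apply hσ s s).add
    (((integrable_gaussDensity hσ).mul_const _).div_const _)).const_mul _

theorem abs_fderiv_fderiv_integral_smul_gaussDensity_apply_le (hσ : σ ≠ 0) (hk : Measurable k)
    (hk0 : ∀ w, 0 ≤ k w) (hkM : ∀ w, k w ≤ M) (μ s : V) :
    |fderiv ℝ (fderiv ℝ fun μ => ∫ w, k w • gaussDensity σ (w - μ)) μ s s| ≤
      M / σ ^ 2 * ‖s‖ ^ 2 := by
  have hk_abs : ∀ w, |k w| ≤ M := fun w => by rw [abs_of_nonneg (hk0 w)]; exact hkM w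
  have hshift : ∫ w, k w * gaussDensityHessian σ (w - μ) s s =
      ∫ v, k (v + μ) * gaussDensityHessian σ v s s := by
    simpa using integral_sub_right_eq_self (fun v => k (v + μ) * gaussDensityHessian σ v s s) μ
  rw [(hasFDerivAt_fderiv_integral_smul_gaussDensity hσ hk hk_abs μ).fderiv,
    integral_smul_gaussDensityHessian_apply hσ hk hk_abs μ s s, hshift]
  simp only [gaussDensityHessian_apply_self]
  refine (abs_integral_mul_sub_le (c := ‖s‖ ^ 2 / σ ^ 2)
    (q := fun v => gaussDensity σ v * ⟪v, s⟫ ^ 2 / σ ^ 4)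
    (r := fun v => gaussDensity σ v * ‖s‖ ^ 2 / σ ^ 2)
    (hk.comp (measurable_add_const μ)).aestronglyMeasurable (fun v => hk0 _) (fun v => hkM _)
    (fun v => by have := gaussDensity_nonneg (σ := σ) v; positivity)
    (fun v => by have := gaussDensity_nonneg (σ := σ) v; positivity)
    ((integrable_gaussDensity_mul_inner_sq hσ s).div_const _)
    (((integrable_gaussDensity hσ).mul_const _).div_const _) ?_ ?_).trans_eq (by ring)
  · rw [integral_div, integral_gaussDensity_mul_inner_sq hσ]
    field_simp
  · rw [integral_div, integral_mul_const, integral_gaussDensity hσ, one_mul]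

end Smoothing

theorem gaussSmooth_eq_integral_smul_gaussDensity (d : ℕ) (σ : ℝ)
    (k : EuclideanSpace ℝ (Fin d) → ℝ) :
    gaussSmooth d σ k = fun μ => ∫ w, k w • gaussDensity σ (w - μ) := by
  ext μ
  simp only [gaussSmooth, gaussDensity, finrank_euclideanSpace_fin, smul_eq_mul, mul_comm (k _)]

theorem stmt_6_general (d : ℕ) (σ M : ℝ) (hσ : 0 < σ)
    (k : EuclideanSpace ℝ (Fin d) → ℝ) (hmeas : Measurable k)
    (hk0 : ∀ w, 0 ≤ k w) (hkM : ∀ w, k w ≤ M)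
    (g : EuclideanSpace ℝ (Fin d) → ℝ) (hg : g = gaussSmooth d σ k)
    (μ s : EuclideanSpace ℝ (Fin d)) :
    |iteratedFDeriv ℝ 2 g μ ![s, s]| ≤ (M / σ ^ 2) * ‖s‖ ^ 2 := by
  rw [hg, gaussSmooth_eq_integral_smul_gaussDensity, iteratedFDeriv_two_apply]
  exact abs_fderiv_fderiv_integral_smul_gaussDensity_apply_le hσ.ne' hmeas hk0 hkM μ s

theorem stmt_6 (d : ℕ) (hd : 1 ≤ d) (σ M : ℝ) (hσ : 0 < σ) (hM : 0 < M)
    (k : EuclideanSpace ℝ (Fin d) → ℝ) (hmeas : Measurable k)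
    (hk0 : ∀ w, 0 ≤ k w) (hkM : ∀ w, k w ≤ M)
    (g : EuclideanSpace ℝ (Fin d) → ℝ) (hg : g = gaussSmooth d σ k)
    (μ s : EuclideanSpace ℝ (Fin d)) :
    |iteratedFDeriv ℝ 2 g μ ![s, s]| ≤ (M / σ ^ 2) * ‖s‖ ^ 2 :=
  stmt_6_general d σ M hσ k hmeas hk0 hkM g hg μ s
end

section
/- Let k : ℝ^d → ℝ be a measurable function with 0 ≤ k(w) ≤ M for all w ∈ ℝ^d, and let g be its Gaussian smoothing with parameter σ > 0. Then g is differentiable on ℝ^d and its gradient admits the reparameterized score-function representation ∇g(μ) = ∫_{ℝ^d} (2π)^{−d/2} exp(−‖w‖²/2) · (w/σ) · k(μ + σw) dw, i.e., ∇g(μ) = E_{w∼N(0,I)}[(w/σ)·k(μ + σw)]. -/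
/-!
Differentiate `μ ↦ ∫ exp(-‖w - μ‖²/(2σ²)) k(w) dw` under the integral sign. The `μ`-gradient of
the integrand is `σ⁻² (w - μ)` times the integrand, and since `k` is bounded, for `μ` within
distance 1 of `μ₀` it is dominated by a multiple of the integrable function
`(‖w - μ₀‖ + 1) exp(-‖w - μ₀‖²/(4σ²))`. The substitution `w = μ + σ v` then puts the gradient
in score-function form.
-/

open MeasureTheory Real InnerProductSpace

lemma exp_neg_mul_norm_sub_sq_le {F : Type*} [SeminormedAddCommGroup F] {b : ℝ} (hb : 0 ≤ b)
    {x x₀ : F} (hx : dist x x₀ < 1) (w : F) :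
    exp (-(b * ‖w - x‖ ^ 2)) ≤ exp b * exp (-(b / 2 * ‖w - x₀‖ ^ 2)) := by
  have h : ‖w - x₀‖ ≤ ‖w - x‖ + 1 := by
    rw [dist_eq_norm] at hx
    linarith [norm_sub_le_norm_sub_add_norm_sub w x x₀]
  rw [← exp_add, exp_le_exp]
  nlinarith [pow_le_pow_left₀ (norm_nonneg _) h 2, sq_nonneg (‖w - x‖ - 1)]

theorem integral_comp_add_smul {E F : Type*} [NormedAddCommGroup E] [NormedSpace ℝ E]
    [MeasurableSpace E] [BorelSpace E] [FiniteDimensional ℝ E] (μ : Measure E)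
    [μ.IsAddHaarMeasure] [NormedAddCommGroup F] [NormedSpace ℝ F]
    (f : E → F) (x₀ : E) {σ : ℝ} (hσ : 0 ≤ σ) :
    ∫ v, f (x₀ + σ • v) ∂μ = (σ ^ Module.finrank ℝ E)⁻¹ • ∫ w, f w ∂μ := by
  rw [Measure.integral_comp_smul_of_nonneg μ (fun v => f (x₀ + v)) σ (hR := hσ),
    integral_add_left_eq_self]

lemma hasGradientAt_exp_neg_mul_norm_sub_sq {E : Type*} [NormedAddCommGroup E]
    [InnerProductSpace ℝ E] [CompleteSpace E] (b : ℝ) (w x : E) :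
    HasGradientAt (fun x => exp (-(b * ‖w - x‖ ^ 2)))
      ((2 * b * exp (-(b * ‖w - x‖ ^ 2))) • (w - x)) x := by
  rw [hasGradientAt_iff_hasFDerivAt]
  refine (HasFDerivAt.exp (f := fun x => -(b * ‖w - x‖ ^ 2))
    (((hasFDerivAt_id x).const_sub w).norm_sq.const_mul b).neg).congr_fderiv ?_
  ext y
  simp
  ring

variable {E : Type*} [NormedAddCommGroup E] [InnerProductSpace ℝ E] [FiniteDimensional ℝ E]
  [MeasurableSpace E] [BorelSpace E]

lemma integrable_exp_neg_mul_norm_sq {b : ℝ} (hb : 0 < b) :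
    Integrable fun v : E => exp (-(b * ‖v‖ ^ 2)) := by
  refine (GaussianFourier.integrable_cexp_neg_mul_sq_norm_add (V := E) (b := b)
    (by simpa) 0 0).norm.congr (ae_of_all _ fun v => ?_)
  simp [Complex.norm_exp, ← Complex.ofReal_pow]

lemma integrable_add_one_mul_exp_neg_mul_norm_sq {b : ℝ} (hb : 0 < b) :
    Integrable fun v : E => (‖v‖ + 1) * exp (-(b * ‖v‖ ^ 2)) := by
  refine ((integrable_exp_neg_mul_norm_sq (E := E) (half_pos hb)).const_mul
    (exp (2 * b)⁻¹)).mono' (by fun_prop) (ae_of_all _ fun v => ?_)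
  have amgm : ‖v‖ ≤ b / 2 * ‖v‖ ^ 2 + (2 * b)⁻¹ := by
    field_simp
    nlinarith [sq_nonneg (b * ‖v‖ - 1)]
  rw [norm_of_nonneg (by positivity)]
  calc (‖v‖ + 1) * exp (-(b * ‖v‖ ^ 2))
      ≤ exp (b / 2 * ‖v‖ ^ 2 + (2 * b)⁻¹) * exp (-(b * ‖v‖ ^ 2)) := by
        gcongr
        exact (add_one_le_exp _).trans (exp_le_exp.2 amgm)
    _ = exp (2 * b)⁻¹ * exp (-(b / 2 * ‖v‖ ^ 2)) := by
        rw [← exp_add, ← exp_add]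
        ring_nf

theorem hasGradientAt_integral_exp_neg_mul_norm_sub_sq_mul {b M : ℝ} (hb : 0 < b) {k : E → ℝ}
    (hk : AEStronglyMeasurable k) (hkM : ∀ w, ‖k w‖ ≤ M) (x₀ : E) :
    HasGradientAt (fun x => ∫ w, exp (-(b * ‖w - x‖ ^ 2)) * k w)
      (∫ w, (2 * b * exp (-(b * ‖w - x₀‖ ^ 2)) * k w) • (w - x₀)) x₀ := by
  have hM : 0 ≤ M := (norm_nonneg _).trans (hkM 0)
  rw [hasGradientAt_iff_hasFDerivAt]
  refine HasFDerivAt.congr_fderiv ?_ ((toDual ℝ E).toLinearIsometry.integral_comp_comm _)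
  refine hasFDerivAt_integral_of_dominated_of_fderiv_le (Metric.ball_mem_nhds x₀ one_pos)
    (F' := fun x w => toDual ℝ E ((2 * b * exp (-(b * ‖w - x‖ ^ 2)) * k w) • (w - x)))
    (bound := fun w => 2 * b * exp b * M * ((‖w - x₀‖ + 1) * exp (-(b / 2 * ‖w - x₀‖ ^ 2))))
    (.of_forall fun x => (by fun_prop : Continuous _).aestronglyMeasurable.mul hk) ?_ ?_
    (ae_of_all _ fun w x hx => ?_) ?_ (ae_of_all _ fun w x _ => ?_)
  · refine (((integrable_exp_neg_mul_norm_sq hb).comp_sub_right x₀).mul_const M).mono'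
      ((by fun_prop : Continuous _).aestronglyMeasurable.mul hk) (ae_of_all _ fun w => ?_)
    rw [norm_mul, norm_of_nonneg (exp_nonneg _)]
    gcongr
    exact hkM w
  · exact (toDual ℝ E).continuous.comp_aestronglyMeasurable
      ((((by fun_prop : Continuous _).aestronglyMeasurable.mul hk)).smul
        (by fun_prop : Continuous fun w : E => w - x₀).aestronglyMeasurable)
  · have hdist : ‖w - x‖ ≤ ‖w - x₀‖ + 1 := by
      rw [Metric.mem_ball, dist_eq_norm] at hx
      linarith [norm_sub_le_norm_sub_add_norm_sub w x₀ x, norm_sub_rev x₀ x]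
    calc ‖toDual ℝ E ((2 * b * exp (-(b * ‖w - x‖ ^ 2)) * k w) • (w - x))‖
        = 2 * b * exp (-(b * ‖w - x‖ ^ 2)) * ‖k w‖ * ‖w - x‖ := by
          rw [LinearIsometryEquiv.norm_map, norm_smul, norm_mul, norm_mul,
            norm_of_nonneg (by positivity), norm_of_nonneg (exp_nonneg _)]
      _ ≤ 2 * b * (exp b * exp (-(b / 2 * ‖w - x₀‖ ^ 2))) * M * (‖w - x₀‖ + 1) := by
          gcongr
          · exact exp_neg_mul_norm_sub_sq_le hb.le hx w
          · exact hkM w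
      _ = _ := by ring
  · exact ((integrable_add_one_mul_exp_neg_mul_norm_sq (half_pos hb)).comp_sub_right x₀).const_mul
      _
  · refine ((hasGradientAt_exp_neg_mul_norm_sub_sq b w x).hasFDerivAt.mul_const
      (k w)).congr_fderiv ?_
    rw [map_smul, map_smul, smul_smul, mul_comm (k w)]

theorem hasGradientAt_integral_gaussian_mul {σ M : ℝ} (hσ : 0 < σ) {k : E → ℝ}
    (hk : AEStronglyMeasurable k) (hkM : ∀ w, ‖k w‖ ≤ M) (x₀ : E) :
    HasGradientAt (fun x => ∫ w, exp (-‖w - x‖ ^ 2 / (2 * σ ^ 2)) * k w)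
      (∫ v, (σ ^ Module.finrank ℝ E * exp (-‖v‖ ^ 2 / 2) * k (x₀ + σ • v)) • (σ⁻¹ • v)) x₀ := by
  set b := (2 * σ ^ 2)⁻¹
  have hexp : ∀ t : ℝ, -t / (2 * σ ^ 2) = -(b * t) := fun t => by
    rw [neg_div, div_eq_inv_mul]
  simp_rw [hexp]
  convert hasGradientAt_integral_exp_neg_mul_norm_sub_sq_mul (b := b) (by positivity) hk hkM x₀
    using 1
  set f : E → E := fun w => (2 * b * exp (-(b * ‖w - x₀‖ ^ 2)) * k w) • (w - x₀)
  rw [← smul_inv_smul₀ (pow_ne_zero (Module.finrank ℝ E) hσ.ne') (∫ w, f w),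
    ← integral_comp_add_smul volume f x₀ hσ.le, ← integral_smul]
  congr 1 with v
  simp only [f]
  rw [add_sub_cancel_left, norm_smul, norm_of_nonneg hσ.le, smul_smul, smul_smul, smul_smul]
  congr 1
  simp only [b]
  field_simp

theorem stmt_8_general (d : ℕ) (σ M : ℝ) (hσ : 0 < σ)
    (k : EuclideanSpace ℝ (Fin d) → ℝ) (hmeas : Measurable k)
    (hk0 : ∀ w, 0 ≤ k w) (hkM : ∀ w, k w ≤ M)
    (g : EuclideanSpace ℝ (Fin d) → ℝ) (hg : g = gaussSmooth d σ k) :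
    Differentiable ℝ g ∧ ∀ μ : EuclideanSpace ℝ (Fin d),
      gradient g μ =
        ∫ w : EuclideanSpace ℝ (Fin d),
          ((2 * π) ^ (-(d : ℝ) / 2) * Real.exp (-‖w‖ ^ 2 / 2) * k (μ + σ • w)) • (σ⁻¹ • w) := by
  set C := (2 * π * σ ^ 2) ^ (-(d : ℝ) / 2) with hC_def
  have hC : 0 < C := by positivity
  have hCσ : σ ^ d * C = (2 * π) ^ (-(d : ℝ) / 2) := by
    rw [hC_def, mul_rpow (by positivity) (by positivity), ← rpow_natCast σ 2, ← rpow_mul hσ.le,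
      mul_left_comm, ← rpow_natCast σ d, ← rpow_add hσ,
      show (d : ℝ) + (2 : ℕ) * (-(d : ℝ) / 2) = 0 by push_cast; ring, rpow_zero, mul_one]
  have hg' : g = fun x => ∫ w, exp (-‖w - x‖ ^ 2 / (2 * σ ^ 2)) * (C * k w) := by
    rw [hg]
    funext x
    unfold gaussSmooth
    congr 1 with w
    ring
  have hCk : ∀ w, ‖C * k w‖ ≤ C * M := fun w => by
    rw [norm_mul, norm_of_nonneg hC.le, norm_of_nonneg (hk0 w)]
    exact mul_le_mul_of_nonneg_left (hkM w) hC.le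
  have hgrad : ∀ μ, HasGradientAt g (∫ w : EuclideanSpace ℝ (Fin d),
      ((2 * π) ^ (-(d : ℝ) / 2) * exp (-‖w‖ ^ 2 / 2) * k (μ + σ • w)) • (σ⁻¹ • w)) μ := by
    intro μ
    rw [hg']
    convert hasGradientAt_integral_gaussian_mul hσ
      (hmeas.aestronglyMeasurable.const_mul C) hCk μ using 1
    congr 1 with w
    rw [finrank_euclideanSpace_fin, ← hCσ]
    ring_nf
  exact ⟨fun μ => (hgrad μ).differentiableAt, fun μ => (hgrad μ).gradient⟩

theorem stmt_8 (d : ℕ) (hd : 1 ≤ d) (σ M : ℝ) (hσ : 0 < σ) (hM : 0 < M)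
    (k : EuclideanSpace ℝ (Fin d) → ℝ) (hmeas : Measurable k)
    (hk0 : ∀ w, 0 ≤ k w) (hkM : ∀ w, k w ≤ M)
    (g : EuclideanSpace ℝ (Fin d) → ℝ) (hg : g = gaussSmooth d σ k) :
    Differentiable ℝ g ∧ ∀ μ : EuclideanSpace ℝ (Fin d),
      gradient g μ =
        ∫ w : EuclideanSpace ℝ (Fin d),
          ((2 * π) ^ (-(d : ℝ) / 2) * Real.exp (-‖w‖ ^ 2 / 2) * k (μ + σ • w)) • (σ⁻¹ • w) :=
  stmt_8_general d σ M hσ k hmeas hk0 hkM g hg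
end

section
/- Let k : ℝ^d → ℝ be a measurable function with 0 ≤ k(w) ≤ M for all w ∈ ℝ^d, and let g be its Gaussian smoothing with parameter σ > 0. Then g is differentiable on ℝ^d and its gradient admits the score-function representation ∇g(μ) = ∫_{ℝ^d} (2πσ²)^{−d/2} exp(−‖w − μ‖²/(2σ²)) · ((w − μ)/σ²) · k(w) dw. -/
/-! Differentiate under the integral sign. The `μ`-derivative of the Gaussian density is the
density times the score `(w - μ) / σ²`. As `k` is bounded, on the unit ball around `μ₀` this
derivative is dominated by an integrable Gaussian in `w - μ₀`: `r e^{-r²/2σ²} ≤ σ e^{-r²/4σ²}`,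
and moving the centre by at most `1` costs only the factor `e^{1/4σ²}` while halving the
exponent. -/

open MeasureTheory Real

lemma mul_exp_neg_sq_div_le {σ : ℝ} (hσ : 0 < σ) (r : ℝ) :
    r * exp (-r ^ 2 / (2 * σ ^ 2)) ≤ σ * exp (-r ^ 2 / (4 * σ ^ 2)) := by
  have hr : r ≤ σ * exp (r ^ 2 / (4 * σ ^ 2)) := by
    rw [← div_le_iff₀' hσ]
    calc r / σ ≤ (r / σ) ^ 2 / 4 + 1 := by nlinarith [sq_nonneg (r / σ - 2)]
      _ = r ^ 2 / (4 * σ ^ 2) + 1 := by ring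
      _ ≤ exp (r ^ 2 / (4 * σ ^ 2)) := add_one_le_exp _
  calc r * exp (-r ^ 2 / (2 * σ ^ 2))
      ≤ σ * exp (r ^ 2 / (4 * σ ^ 2)) * exp (-r ^ 2 / (2 * σ ^ 2)) := by gcongr
    _ = σ * exp (-r ^ 2 / (4 * σ ^ 2)) := by rw [mul_assoc, ← exp_add]; ring_nf

section

variable {E : Type*} [NormedAddCommGroup E]

lemma sq_norm_sub_le_two_mul (w x x₀ : E) :
    ‖w - x₀‖ ^ 2 ≤ 2 * (‖w - x‖ ^ 2 + ‖x - x₀‖ ^ 2) :=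
  (pow_le_pow_left₀ (norm_nonneg _) (norm_sub_le_norm_sub_add_norm_sub w x x₀) 2).trans
    add_sq_le

lemma exp_neg_sq_norm_sub_div_le {b : ℝ} (hb : 0 ≤ b) {x x₀ : E} (hx : ‖x - x₀‖ ≤ 1)
    (w : E) :
    exp (-‖w - x‖ ^ 2 / b) ≤ exp (1 / b) * exp (-‖w - x₀‖ ^ 2 / (2 * b)) := by
  rw [← exp_add, exp_le_exp]
  have hx' : ‖x - x₀‖ ^ 2 ≤ 1 := pow_le_one₀ (norm_nonneg _) hx
  calc -‖w - x‖ ^ 2 / b = -(2 * ‖w - x‖ ^ 2) / (2 * b) := by ring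
    _ ≤ (2 - ‖w - x₀‖ ^ 2) / (2 * b) := by
      gcongr
      linarith [sq_norm_sub_le_two_mul w x x₀]
    _ = 1 / b + -‖w - x₀‖ ^ 2 / (2 * b) := by ring

variable [InnerProductSpace ℝ E]

lemma hasGradientAt_exp_neg_sq_norm_sub_div [CompleteSpace E] (σ : ℝ) (w x : E) :
    HasGradientAt (fun x => exp (-‖w - x‖ ^ 2 / (2 * σ ^ 2)))
      (exp (-‖w - x‖ ^ 2 / (2 * σ ^ 2)) • ((σ ^ 2)⁻¹ • (w - x))) x := by
  have h := (((hasFDerivAt_id x).const_sub w).norm_sq.const_mul (-(2 * σ ^ 2)⁻¹)).exp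
  have he : ∀ y : E, -(2 * σ ^ 2)⁻¹ * ‖w - y‖ ^ 2 = -‖w - y‖ ^ 2 / (2 * σ ^ 2) :=
    fun y => by ring
  simp only [id, he] at h
  rw [hasGradientAt_iff_hasFDerivAt]
  refine h.congr_fderiv ?_
  ext v
  simp [InnerProductSpace.toDual_apply_apply]
  ring

lemma norm_smul_exp_neg_sq_norm_sub_div_le {σ : ℝ} (hσ : 0 < σ) {x x₀ : E}
    (hx : ‖x - x₀‖ ≤ 1) (w : E) {a M : ℝ} (ha : ‖a‖ ≤ M) :
    ‖(exp (-‖w - x‖ ^ 2 / (2 * σ ^ 2)) * a) • ((σ ^ 2)⁻¹ • (w - x))‖ ≤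
      M / σ * exp (1 / (4 * σ ^ 2)) * exp (-‖w - x₀‖ ^ 2 / (8 * σ ^ 2)) := by
  have hM : 0 ≤ M := (norm_nonneg a).trans ha
  have hshift := exp_neg_sq_norm_sub_div_le (b := 4 * σ ^ 2) (by positivity) hx w
  rw [show 2 * (4 * σ ^ 2) = 8 * σ ^ 2 by ring] at hshift
  calc ‖(exp (-‖w - x‖ ^ 2 / (2 * σ ^ 2)) * a) • ((σ ^ 2)⁻¹ • (w - x))‖
      = ‖a‖ * (σ ^ 2)⁻¹ * (‖w - x‖ * exp (-‖w - x‖ ^ 2 / (2 * σ ^ 2))) := by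
        rw [norm_smul, norm_smul, norm_mul, norm_of_nonneg (exp_nonneg _),
          norm_of_nonneg (by positivity : (0 : ℝ) ≤ (σ ^ 2)⁻¹)]
        ring
    _ ≤ M * (σ ^ 2)⁻¹ * (σ * exp (-‖w - x‖ ^ 2 / (4 * σ ^ 2))) := by
        gcongr ?_ * _ * ?_
        exact mul_exp_neg_sq_div_le hσ _
    _ ≤ M * (σ ^ 2)⁻¹ *
          (σ * (exp (1 / (4 * σ ^ 2)) * exp (-‖w - x₀‖ ^ 2 / (8 * σ ^ 2)))) := by
        gcongr
    _ = M / σ * exp (1 / (4 * σ ^ 2)) * exp (-‖w - x₀‖ ^ 2 / (8 * σ ^ 2)) := by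
        field_simp

variable [FiniteDimensional ℝ E] [MeasurableSpace E] [BorelSpace E]

lemma integrable_exp_neg_sq_norm_sub_div {b : ℝ} (hb : 0 < b) (x₀ : E) :
    Integrable fun w : E => exp (-‖w - x₀‖ ^ 2 / b) := by
  have h := (GaussianFourier.integrable_cexp_neg_mul_sq_norm_add (V := E) (b := (b⁻¹ : ℂ))
    (by simpa using hb) 0 0).norm
  refine Integrable.comp_sub_right (f := fun w : E => exp (-‖w‖ ^ 2 / b))
    (h.congr (ae_of_all _ fun v => ?_)) x₀
  simp only [Complex.norm_exp]
  norm_cast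
  simp
  ring

lemma integrable_exp_neg_sq_norm_sub_div_mul {σ : ℝ} (hσ : σ ≠ 0) {k : E → ℝ} {M : ℝ}
    (hk : AEStronglyMeasurable k) (hkM : ∀ᵐ w, ‖k w‖ ≤ M) (x₀ : E) :
    Integrable fun w => exp (-‖w - x₀‖ ^ 2 / (2 * σ ^ 2)) * k w :=
  (integrable_exp_neg_sq_norm_sub_div (by positivity) x₀).mul_bdd hk hkM

theorem hasGradientAt_integral_exp_neg_sq_norm_sub_div_mul {σ : ℝ} (hσ : 0 < σ) {k : E → ℝ}
    {M : ℝ} (hk : AEStronglyMeasurable k) (hkM : ∀ᵐ w, ‖k w‖ ≤ M) (x₀ : E) :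
    HasGradientAt (fun x => ∫ w, exp (-‖w - x‖ ^ 2 / (2 * σ ^ 2)) * k w)
      (∫ w, (exp (-‖w - x₀‖ ^ 2 / (2 * σ ^ 2)) * k w) • ((σ ^ 2)⁻¹ • (w - x₀))) x₀ := by
  set G : E → E → E := fun x w =>
    (exp (-‖w - x‖ ^ 2 / (2 * σ ^ 2)) * k w) • ((σ ^ 2)⁻¹ • (w - x))
  set bound : E → ℝ := fun w =>
    M / σ * exp (1 / (4 * σ ^ 2)) * exp (-‖w - x₀‖ ^ 2 / (8 * σ ^ 2))
  have hG_le : ∀ᵐ w, ∀ x ∈ Metric.ball x₀ 1, ‖G x w‖ ≤ bound w :=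
    hkM.mono fun w hw x hx =>
      norm_smul_exp_neg_sq_norm_sub_div_le hσ (mem_ball_iff_norm.1 hx).le w hw
  have hbound : Integrable bound :=
    (integrable_exp_neg_sq_norm_sub_div (by positivity) x₀).const_mul _
  have hG_meas : AEStronglyMeasurable (G x₀) :=
    (integrable_exp_neg_sq_norm_sub_div_mul hσ.ne' hk hkM x₀).aestronglyMeasurable.smul
      (by fun_prop : Continuous fun w : E => (σ ^ 2)⁻¹ • (w - x₀)).aestronglyMeasurable
  have hG_int : Integrable (G x₀) :=
    hbound.mono' hG_meas (hG_le.mono fun w hw => hw x₀ (Metric.mem_ball_self one_pos))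
  have hderiv := hasFDerivAt_integral_of_dominated_of_fderiv_le
    (F' := fun x w => innerSL ℝ (G x w)) (Metric.ball_mem_nhds x₀ one_pos)
    (Filter.Eventually.of_forall fun x =>
      (integrable_exp_neg_sq_norm_sub_div_mul hσ.ne' hk hkM x).aestronglyMeasurable)
    (integrable_exp_neg_sq_norm_sub_div_mul hσ.ne' hk hkM x₀)
    ((innerSL ℝ).continuous.comp_aestronglyMeasurable hG_meas)
    (by simpa only [innerSL_apply_norm] using hG_le) hbound
    (ae_of_all _ fun w x _ =>
      ((hasGradientAt_exp_neg_sq_norm_sub_div σ w x).hasFDerivAt.mul_const (k w)).congr_fderiv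
        (by ext v; simp [G]; ring))
  rw [(innerSL ℝ).integral_comp_commSL (by simp) hG_int] at hderiv
  exact hasGradientAt_iff_hasFDerivAt.2 hderiv

end

theorem stmt_9_general (d : ℕ) (σ M : ℝ) (hσ : 0 < σ)
    (k : EuclideanSpace ℝ (Fin d) → ℝ) (hmeas : Measurable k)
    (hk0 : ∀ w, 0 ≤ k w) (hkM : ∀ w, k w ≤ M)
    (g : EuclideanSpace ℝ (Fin d) → ℝ) (hg : g = gaussSmooth d σ k) :
    Differentiable ℝ g ∧ ∀ μ : EuclideanSpace ℝ (Fin d),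
      gradient g μ =
        ∫ w : EuclideanSpace ℝ (Fin d),
          ((2 * π * σ ^ 2) ^ (-(d : ℝ) / 2) * Real.exp (-‖w - μ‖ ^ 2 / (2 * σ ^ 2)) * k w) •
            ((σ ^ 2)⁻¹ • (w - μ)) := by
  set c : ℝ := (2 * π * σ ^ 2) ^ (-(d : ℝ) / 2)
  have hc : 0 ≤ c := by positivity
  have hck : ∀ w, ‖c * k w‖ ≤ c * M := fun w => by
    rw [norm_mul, norm_of_nonneg hc, norm_of_nonneg (hk0 w)]
    exact mul_le_mul_of_nonneg_left (hkM w) hc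
  have hgrad := hasGradientAt_integral_exp_neg_sq_norm_sub_div_mul hσ
    (hmeas.const_mul c).aestronglyMeasurable (ae_of_all _ hck)
  have hg' : g = fun μ => ∫ w, exp (-‖w - μ‖ ^ 2 / (2 * σ ^ 2)) * (c * k w) := by
    rw [hg]
    ext μ
    exact integral_congr_ae (ae_of_all _ fun w => by ring)
  rw [hg']
  refine ⟨fun μ => (hgrad μ).differentiableAt, fun μ => ?_⟩
  rw [(hgrad μ).gradient]
  congr 1 with w
  rw [mul_left_comm, mul_assoc]

theorem stmt_9 (d : ℕ) (hd : 1 ≤ d) (σ M : ℝ) (hσ : 0 < σ) (hM : 0 < M)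
    (k : EuclideanSpace ℝ (Fin d) → ℝ) (hmeas : Measurable k)
    (hk0 : ∀ w, 0 ≤ k w) (hkM : ∀ w, k w ≤ M)
    (g : EuclideanSpace ℝ (Fin d) → ℝ) (hg : g = gaussSmooth d σ k) :
    Differentiable ℝ g ∧ ∀ μ : EuclideanSpace ℝ (Fin d),
      gradient g μ =
        ∫ w : EuclideanSpace ℝ (Fin d),
          ((2 * π * σ ^ 2) ^ (-(d : ℝ) / 2) * Real.exp (-‖w - μ‖ ^ 2 / (2 * σ ^ 2)) * k w) •
            ((σ ^ 2)⁻¹ • (w - μ)) :=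
  stmt_9_general d σ M hσ k hmeas hk0 hkM g hg
end

section
/- Fix an integer K ≥ 1, a score function h : {1,…,K} → ℝ, and let c be the Euler–Mascheroni constant. For each j let G_j(t) = exp(−exp(−(t + c − h(j)))) be the Gumbel cumulative distribution function with location h(j), and let g_j(t) = exp(−((t + c − h(j)) + exp(−(t + c − h(j))))) be the corresponding Gumbel probability density. Then for every z ∈ {1,…,K}, ∫_ℝ g_z(t) · ∏_{j ≠ z} G_j(t) dt = exp(h(z)) / ∑_{j=1}^{K} exp(h(j)). In other words, the probability that K independent Gumbel random variables with locations h(1),…,h(K) attain their maximum at index z equals the softmax probability of z (the Gumbel-Max trick). -/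
set_option maxHeartbeats 1000000

open MeasureTheory Real Finset

/-- Gumbel CDF with location `a`, shifted by the Euler–Mascheroni constant so its mean is `a`. -/
noncomputable def gumbelCdf (a t : ℝ) : ℝ :=
  Real.exp (-Real.exp (-(t + Real.eulerMascheroniConstant - a)))

/-- Gumbel PDF with location `a`, shifted by the Euler–Mascheroni constant so its mean is `a`. -/
noncomputable def gumbelPdf (a t : ℝ) : ℝ :=
  Real.exp (-((t + Real.eulerMascheroniConstant - a) +
    Real.exp (-(t + Real.eulerMascheroniConstant - a))))

lemma aux_xex {S x : ℝ} (hS : 0 < S) (hx : 0 < x) :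
    x * Real.exp (-(S * x)) ≤ 2 / S * Real.exp (-(S / 2 * x)) := by
  have h1 : S / 2 * x ≤ Real.exp (S / 2 * x) := by
    have := Real.add_one_le_exp (S / 2 * x); linarith
  have h2 : Real.exp (-(S * x)) = Real.exp (-(S / 2 * x)) * Real.exp (-(S / 2 * x)) := by
    rw [← Real.exp_add]; ring_nf
  rw [h2]
  have h3 : x * Real.exp (-(S / 2 * x)) ≤ 2 / S := by
    rw [Real.exp_neg, mul_inv_le_iff₀ (Real.exp_pos _)]
    calc x = (S / 2 * x) * (2 / S) := by field_simp
    _ ≤ Real.exp (S / 2 * x) * (2 / S) := by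
        apply mul_le_mul_of_nonneg_right h1; positivity
    _ = 2 / S * Real.exp (S / 2 * x) := by ring
  calc x * (Real.exp (-(S / 2 * x)) * Real.exp (-(S / 2 * x)))
      = (x * Real.exp (-(S / 2 * x))) * Real.exp (-(S / 2 * x)) := by ring
    _ ≤ 2 / S * Real.exp (-(S / 2 * x)) :=
        mul_le_mul_of_nonneg_right h3 (Real.exp_pos _).le

lemma aux_sq {S x : ℝ} (hS : 0 < S) (hx : 0 < x) :
    x ^ 2 * Real.exp (-(S * x)) ≤ 16 / S ^ 2 := by
  have h1 := aux_xex (half_pos hS) hx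
  have h1' : x * Real.exp (-(S / 2 * x)) ≤ 4 / S := by
    calc x * Real.exp (-(S / 2 * x)) ≤ 2 / (S / 2) * Real.exp (-(S / 2 / 2 * x)) := h1
      _ ≤ 2 / (S / 2) * 1 := by
          apply mul_le_mul_of_nonneg_left _ (by positivity)
          rw [Real.exp_le_one_iff]
          have : 0 ≤ S / 2 / 2 * x := by positivity
          linarith
      _ = 4 / S := by rw [mul_one]; field_simp; ring
  have hsq := mul_le_mul h1' h1' (by positivity) (by positivity)
  calc x ^ 2 * Real.exp (-(S * x))
        = (x * Real.exp (-(S / 2 * x))) * (x * Real.exp (-(S / 2 * x))) := by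
          rw [show -(S * x) = -(S / 2 * x) + -(S / 2 * x) by ring, Real.exp_add]; ring
    _ ≤ (4 / S) * (4 / S) := hsq
    _ = 16 / S ^ 2 := by ring

/-- The key integral: `∫ e^{-(t+c)} e^{-S e^{-(t+c)}} dt = 1/S`. -/
lemma aux_integral (c S : ℝ) (hS : 0 < S) :
    (∫ t : ℝ, Real.exp (-(t + c)) * Real.exp (-(S * Real.exp (-(t + c))))) = 1 / S := by
  have hderiv : ∀ t : ℝ, HasDerivAt (fun t : ℝ => Real.exp (-(S * Real.exp (-(t + c)))) / S)
      (Real.exp (-(t + c)) * Real.exp (-(S * Real.exp (-(t + c))))) t := by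
    intro t
    have h1 : HasDerivAt (fun t : ℝ => -(t + c)) (-1) t := ((hasDerivAt_id t).add_const c).neg
    have h2 : HasDerivAt (fun t : ℝ => -(S * Real.exp (-(t + c))))
        (-(S * (Real.exp (-(t + c)) * -1))) t := (h1.exp.const_mul S).neg
    have h3 := h2.exp.div_const S
    have heq : Real.exp (-(S * Real.exp (-(t + c)))) * -(S * (Real.exp (-(t + c)) * -1)) / S
        = Real.exp (-(t + c)) * Real.exp (-(S * Real.exp (-(t + c)))) := by
      field_simp
    exact heq ▸ h3
  have hbot : Filter.Tendsto (fun t : ℝ => Real.exp (-(S * Real.exp (-(t + c)))) / S)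
      Filter.atBot (nhds 0) := by
    have h1 : Filter.Tendsto (fun t : ℝ => -(t + c)) Filter.atBot Filter.atTop := by
      apply Filter.tendsto_neg_atBot_atTop.comp
      exact Filter.tendsto_atBot_add_const_right _ c Filter.tendsto_id
    have h2 : Filter.Tendsto (fun t : ℝ => -(S * Real.exp (-(t + c)))) Filter.atBot
        Filter.atBot := by
      apply Filter.tendsto_neg_atTop_atBot.comp
      exact (Real.tendsto_exp_atTop.comp h1).const_mul_atTop hS
    have h3 := (Real.tendsto_exp_atBot.comp h2).div_const S
    simpa [Function.comp] using h3
  have htop : Filter.Tendsto (fun t : ℝ => Real.exp (-(S * Real.exp (-(t + c)))) / S)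
      Filter.atTop (nhds (1 / S)) := by
    have h1 : Filter.Tendsto (fun t : ℝ => -(t + c)) Filter.atTop Filter.atBot := by
      apply Filter.tendsto_neg_atTop_atBot.comp
      exact Filter.tendsto_atTop_add_const_right _ c Filter.tendsto_id
    have h2 : Filter.Tendsto (fun t : ℝ => -(S * Real.exp (-(t + c)))) Filter.atTop
        (nhds 0) := by
      have := ((Real.tendsto_exp_atBot.comp h1).const_mul S).neg
      simpa [Function.comp] using this
    have h3 := ((Real.continuous_exp.tendsto 0).comp h2).div_const S
    simpa [Function.comp] using h3
  have hnonneg : ∀ t : ℝ, 0 ≤ Real.exp (-(t + c)) * Real.exp (-(S * Real.exp (-(t + c)))) :=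
    fun t => by positivity
  have hcont : Continuous (fun t : ℝ =>
      Real.exp (-(t + c)) * Real.exp (-(S * Real.exp (-(t + c))))) := by
    fun_prop
  have hIoi : IntegrableOn (fun t : ℝ =>
      Real.exp (-(t + c)) * Real.exp (-(S * Real.exp (-(t + c))))) (Set.Ioi (0:ℝ)) := by
    apply Integrable.mono' ((exp_neg_integrableOn_Ioi 0 one_pos).const_mul (Real.exp (-c)))
    · exact hcont.aestronglyMeasurable.restrict
    · filter_upwards with t
      rw [Real.norm_of_nonneg (hnonneg t)]
      have h1 : Real.exp (-(S * Real.exp (-(t + c)))) ≤ 1 := by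
        rw [Real.exp_le_one_iff]
        have : 0 ≤ S * Real.exp (-(t + c)) := by positivity
        linarith
      calc Real.exp (-(t + c)) * Real.exp (-(S * Real.exp (-(t + c))))
          ≤ Real.exp (-(t + c)) * 1 := mul_le_mul_of_nonneg_left h1 (Real.exp_pos _).le
        _ = Real.exp (-c) * Real.exp (-1 * t) := by rw [← Real.exp_add]; ring_nf
  have hIic : IntegrableOn (fun t : ℝ =>
      Real.exp (-(t + c)) * Real.exp (-(S * Real.exp (-(t + c))))) (Set.Iic (0:ℝ)) := by
    apply Integrable.mono' ((integrableOn_exp_Iic 0).const_mul (16 * Real.exp c / S ^ 2))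
    · exact hcont.aestronglyMeasurable.restrict
    · filter_upwards with t
      rw [Real.norm_of_nonneg (hnonneg t)]
      have hxpos : (0:ℝ) < Real.exp (-(t + c)) := Real.exp_pos _
      have hb : Real.exp (-(t + c)) ^ 2 * Real.exp (-(S * Real.exp (-(t + c)))) ≤ 16 / S ^ 2 :=
        aux_sq hS hxpos
      have hxinv : (Real.exp (-(t + c)))⁻¹ = Real.exp (t + c) := by
        rw [← Real.exp_neg, neg_neg]
      calc Real.exp (-(t + c)) * Real.exp (-(S * Real.exp (-(t + c))))
          = (Real.exp (-(t + c)) ^ 2 * Real.exp (-(S * Real.exp (-(t + c))))) *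
            (Real.exp (-(t + c)))⁻¹ := by field_simp
        _ ≤ (16 / S ^ 2) * (Real.exp (-(t + c)))⁻¹ :=
            mul_le_mul_of_nonneg_right hb (by positivity)
        _ = 16 * Real.exp c / S ^ 2 * Real.exp t := by rw [hxinv, Real.exp_add]; ring
  have hint : Integrable (fun t : ℝ =>
      Real.exp (-(t + c)) * Real.exp (-(S * Real.exp (-(t + c))))) := by
    rw [← integrableOn_univ, ← Set.Iic_union_Ioi (a := (0:ℝ))]
    exact hIic.union hIoi
  have hFT := MeasureTheory.integral_of_hasDerivAt_of_tendsto hderiv hint hbot htop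
  rw [hFT]; ring

/-- The Gumbel-Max trick: the probability that `K` independent Gumbel random variables with
locations `h 1, …, h K` attain their maximum at index `z` equals the softmax probability of
`z`. -/
theorem stmt_13 (K : ℕ) (hK : 1 ≤ K) (h : Fin K → ℝ) (z : Fin K) :
    (∫ t : ℝ, gumbelPdf (h z) t * ∏ j ∈ Finset.univ.erase z, gumbelCdf (h j) t) =
      Real.exp (h z) / ∑ j, Real.exp (h j) := by
  have hS : 0 < ∑ j, Real.exp (h j) :=
    Finset.sum_pos (fun j _ => Real.exp_pos _) ⟨z, Finset.mem_univ z⟩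
  set c := Real.eulerMascheroniConstant with hc
  set S : ℝ := ∑ j, Real.exp (h j) with hSdef
  have key : ∀ t : ℝ, gumbelPdf (h z) t * ∏ j ∈ Finset.univ.erase z, gumbelCdf (h j) t
      = Real.exp (h z) * (Real.exp (-(t + c)) * Real.exp (-(S * Real.exp (-(t + c))))) := by
    intro t
    have hpdf : gumbelPdf (h z) t
        = Real.exp (h z) * Real.exp (-(t + c)) * gumbelCdf (h z) t := by
      unfold gumbelPdf gumbelCdf
      rw [← hc, ← Real.exp_add, ← Real.exp_add, Real.exp_eq_exp]
      ring
    have hprod : ∏ j, gumbelCdf (h j) t = Real.exp (-(S * Real.exp (-(t + c)))) := by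
      unfold gumbelCdf
      rw [← Real.exp_sum, Real.exp_eq_exp, hSdef, Finset.sum_mul, ← Finset.sum_neg_distrib]
      refine Finset.sum_congr rfl fun j _ => ?_
      rw [← Real.exp_add, hc]
      congr 1
      ring
    calc gumbelPdf (h z) t * ∏ j ∈ Finset.univ.erase z, gumbelCdf (h j) t
        = Real.exp (h z) * Real.exp (-(t + c)) *
          (gumbelCdf (h z) t * ∏ j ∈ Finset.univ.erase z, gumbelCdf (h j) t) := by
          rw [hpdf]; ring
      _ = Real.exp (h z) * Real.exp (-(t + c)) * ∏ j, gumbelCdf (h j) t := by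
          rw [Finset.mul_prod_erase Finset.univ (fun j => gumbelCdf (h j) t)
            (Finset.mem_univ z)]
      _ = Real.exp (h z) * (Real.exp (-(t + c)) * Real.exp (-(S * Real.exp (-(t + c))))) := by
          rw [hprod]; ring
  calc (∫ t : ℝ, gumbelPdf (h z) t * ∏ j ∈ Finset.univ.erase z, gumbelCdf (h j) t)
      = ∫ t : ℝ, Real.exp (h z) *
          (Real.exp (-(t + c)) * Real.exp (-(S * Real.exp (-(t + c))))) := by
        exact integral_congr_ae (Filter.Eventually.of_forall key)
    _ = Real.exp (h z) * ∫ t : ℝ, Real.exp (-(t + c)) * Real.exp (-(S * Real.exp (-(t + c)))) :=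
        MeasureTheory.integral_const_mul _ _
    _ = Real.exp (h z) * (1 / S) := by rw [aux_integral c S hS]
    _ = Real.exp (h z) / S := by ring
end

section
/- Fix an integer K ≥ 1, a score function h : {1,…,K} → ℝ, and let c be the Euler–Mascheroni constant. For each j let G_j(t) = exp(−exp(−(t + c − h(j)))). Then ∫_ℝ exp(−(t + c)) · ∏_{j=1}^{K} G_j(t) dt = 1 / ∑_{j=1}^{K} exp(h(j)). -/
open MeasureTheory Real Finset

theorem stmt_14 (K : ℕ) (hK : 1 ≤ K) (h : Fin K → ℝ) :
    (∫ t : ℝ, Real.exp (-(t + Real.eulerMascheroniConstant)) * ∏ j, gumbelCdf (h j) t) =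
      1 / ∑ j, Real.exp (h j) := by
  set c := Real.eulerMascheroniConstant with hc
  set S := ∑ j, Real.exp (h j) with hS
  have hSpos : 0 < S := by
    have : Nonempty (Fin K) := ⟨⟨0, hK⟩⟩
    exact Finset.sum_pos (fun j _ => Real.exp_pos _) Finset.univ_nonempty
  -- rewrite integrand
  have key : ∀ t : ℝ, Real.exp (-(t + c)) * ∏ j, gumbelCdf (h j) t
      = |(-Real.exp (-(t + c)))| • Real.exp (-(S * Real.exp (-(t + c)))) := by
    intro t
    have h1 : ∏ j, gumbelCdf (h j) t = Real.exp (-(S * Real.exp (-(t + c)))) := by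
      simp only [gumbelCdf]
      rw [← Real.exp_sum]
      congr 1
      rw [hS, Finset.sum_mul, ← Finset.sum_neg_distrib]
      refine Finset.sum_congr rfl fun j _ => ?_
      rw [← Real.exp_add]
      congr 1
      simp only [hc]
      ring_nf
    rw [h1, abs_neg, abs_of_nonneg (Real.exp_pos _).le, smul_eq_mul]
  rw [MeasureTheory.integral_congr_ae (Filter.Eventually.of_forall key)]
  -- change of variables: x = exp (-(t+c))
  have hinj : Set.InjOn (fun t : ℝ => Real.exp (-(t + c))) Set.univ := by
    intro a _ b _ hab
    simp only at hab
    have := Real.exp_injective hab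
    linarith [neg_injective this]
  have hderiv : ∀ t ∈ (Set.univ : Set ℝ),
      HasDerivWithinAt (fun t : ℝ => Real.exp (-(t + c))) (-Real.exp (-(t + c))) Set.univ t := by
    intro t _
    have H := (((hasDerivAt_id t).add_const c).neg.exp).hasDerivWithinAt
      (s := (Set.univ : Set ℝ))
    simpa using H
  have himg : (fun t : ℝ => Real.exp (-(t + c))) '' Set.univ = Set.Ioi 0 := by
    rw [Set.image_univ]
    ext x
    constructor
    · rintro ⟨t, rfl⟩; exact Real.exp_pos _
    · intro hx
      exact ⟨-Real.log x - c, by simp [Real.exp_log hx]⟩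
  have cov := integral_image_eq_integral_abs_deriv_smul (MeasurableSet.univ)
    hderiv hinj (fun x => Real.exp (-(S * x)))
  rw [himg] at cov
  rw [MeasureTheory.setIntegral_univ] at cov
  rw [← cov]
  -- compute ∫ x in Ioi 0, exp (-(S * x))
  have := MeasureTheory.integral_comp_mul_left_Ioi (fun x => Real.exp (-x)) 0 hSpos
  simp only [mul_zero, smul_eq_mul] at this
  rw [this, integral_exp_neg_Ioi, neg_zero, Real.exp_zero, mul_one, one_div]
end
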